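/- The stationary mean of the information-density function equals the capacity formula of the timing channel: ∑_{ψ∈𝕏} π_Ψ(ψ)·f(ψ) = H(λ) − (λ/μ)·H(μ), where H(p) = −p log p − (1−p) log(1−p) is the binary entropy function. -/

import Mathlib

open scoped BigOperators

noncomputable section

/-- The state space `𝕏 = {(0,q) : q ∈ ℕ} ∪ {(1,q) : q ≥ 1}` of the joint chain,
with the departure indicator encoded as a `Bool`. -/
abbrev XS : Type := {p : Bool × ℕ // p.1 = true → 1 ≤ p.2}

/-- `ρ = λμ̄/(λ̄μ)`. -/
def rho (lam mu : ℝ) : ℝ := lam * (1 - mu) / ((1 - lam) * mu)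

/-- The invariant distribution `π_Q` of the queue-length chain. -/
def piQ (lam mu : ℝ) (q : ℕ) : ℝ :=
  if q = 0 then ((1 - lam) * mu - lam * (1 - mu)) / mu
  else ((1 - lam) * mu - lam * (1 - mu)) / (mu * (1 - mu)) * rho lam mu ^ q

/-- The queue kernel `K` on ℕ. -/
def kerQ (lam mu : ℝ) (q q' : ℕ) : ℝ :=
  if q = 0 then (if q' = 1 then lam else if q' = 0 then 1 - lam else 0)
  else if q' + 1 = q then (1 - lam) * mu
  else if q' = q + 1 then lam * (1 - mu)
  else if q' = q then 1 - lam * (1 - mu) - (1 - lam) * mu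
  else 0

/-- The invariant distribution `π_Ψ` of the joint chain `(ỹ, q)`. -/
def piPsi (lam mu : ℝ) : Bool × ℕ → ℝ
  | (false, 0) => piQ lam mu 0
  | (false, q + 1) => (1 - mu) * piQ lam mu (q + 1)
  | (true, 0) => 0
  | (true, q + 1) => mu * piQ lam mu (q + 1)

/-- The transition kernel `P` of the joint chain: from `(ỹ,q)`, with arrival
`x̃ = q' - q + ỹ ∈ {0,1}` (probability `λ` resp. `λ̄`), the next state is `(ỹ',q')`
with departure probability `1,0` at `q' = 0` and `μ̄, μ` at `q' ≥ 1`. -/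
def kerP (lam mu : ℝ) (ψ ψ' : Bool × ℕ) : ℝ :=
  (if ((ψ'.2 : ℤ) - (ψ.2 : ℤ) + (if ψ.1 then 1 else 0)) = 1 then lam
   else if ((ψ'.2 : ℤ) - (ψ.2 : ℤ) + (if ψ.1 then 1 else 0)) = 0 then 1 - lam
   else 0) *
  (if ψ'.2 = 0 then (if ψ'.1 then 0 else 1) else (if ψ'.1 then mu else 1 - mu))

/-- The `i`-step kernel `P^i` of the joint chain. -/
def kerIter (lam mu : ℝ) : ℕ → Bool × ℕ → Bool × ℕ → ℝ
  | 0, ψ, ψ' => if ψ = ψ' then 1 else 0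
  | i + 1, ψ, ψ' => ∑' ψ'' : XS, kerIter lam mu i ψ ψ''.val * kerP lam mu ψ''.val ψ'

/-- The information-density function `f` on the joint state space. -/
def fInfo (lam mu : ℝ) : Bool × ℕ → ℝ
  | (false, 0) => Real.log (1 / (1 - lam))
  | (false, _ + 1) => Real.log ((1 - mu) / (1 - lam))
  | (true, 0) => 0
  | (true, _ + 1) => Real.log (mu / lam)

/-- The binary entropy function. -/
def Hbin (p : ℝ) : ℝ := -(p * Real.log p) - (1 - p) * Real.log (1 - p)

/-- The capacity `C = H(λ) - (λ/μ) H(μ)` of the timing channel. -/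
def Cap (lam mu : ℝ) : ℝ := Hbin lam - lam / mu * Hbin mu

/-- The constant `c_{M0}`. -/
def cM0 (lam mu : ℝ) : ℝ :=
  (1 - lam) / (1 - mu) *
    (mu * Real.log (mu / lam) + (1 - mu) * Real.log ((1 - mu) / (1 - lam)) - Cap lam mu)

/-- The constant `c_{M̃}`. -/
def cMt (lam mu : ℝ) : ℝ :=
  cM0 lam mu / mu + (Cap lam mu - Real.log (mu / lam)) * piQ lam mu 0 / (1 - mu)

/-- The partial stationary sum `M(q,0) = ∑_{ψ' ∈ 𝕏, q' ≤ q} (C - f(ψ')) π_Ψ(ψ')`. -/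
def M0 (lam mu : ℝ) (q : ℕ) : ℝ :=
  ∑' ψ : {p : Bool × ℕ // (p.1 = true → 1 ≤ p.2) ∧ p.2 ≤ q},
    (Cap lam mu - fInfo lam mu ψ.val) * piPsi lam mu ψ.val

/-- The partial stationary sum
`M(q,1) = ∑_{ψ' ∈ 𝕏 : q' < q, or q' = q and ỹ' = 1} (C - f(ψ')) π_Ψ(ψ')`. -/
def M1 (lam mu : ℝ) (q : ℕ) : ℝ :=
  ∑' ψ : {p : Bool × ℕ // (p.1 = true → 1 ≤ p.2) ∧ (p.2 < q ∨ (p.2 = q ∧ p.1 = true))},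
    (Cap lam mu - fInfo lam mu ψ.val) * piPsi lam mu ψ.val

/-- `r(ψ,i) = ∑_{ψ' ∈ 𝕏} (f(ψ') - C) π_Ψ(ψ') P^i(ψ',ψ)`. -/
def rfun (lam mu : ℝ) (i : ℕ) (ψ : Bool × ℕ) : ℝ :=
  ∑' ψ' : XS, (fInfo lam mu ψ'.val - Cap lam mu) * piPsi lam mu ψ'.val *
    kerIter lam mu i ψ'.val ψ

/-- `R(ψ) = ∑_{i=0}^∞ r(ψ,i)`. -/
def Rfun (lam mu : ℝ) (ψ : Bool × ℕ) : ℝ := ∑' i : ℕ, rfun lam mu i ψ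

/-- The stationary autocovariance
`Cov_i = ∑_{ψ,ψ' ∈ 𝕏} π_Ψ(ψ)(f(ψ)-C)(f(ψ')-C) P^i(ψ,ψ')`. -/
def covI (lam mu : ℝ) (i : ℕ) : ℝ :=
  ∑' p : XS × XS,
    piPsi lam mu p.1.val * (fInfo lam mu p.1.val - Cap lam mu) *
      (fInfo lam mu p.2.val - Cap lam mu) * kerIter lam mu i p.1.val p.2.val

/-- The Lyapunov function `V(ỹ,q) = (q - ỹ)/(μ - λ)`. -/
def Vlya (lam mu : ℝ) (ψ : Bool × ℕ) : ℝ :=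
  ((ψ.2 : ℝ) - (if ψ.1 then 1 else 0)) / (mu - lam)

/-- Stationary path probability `ℙ_n` for block length `n = m+1`:
`π_Ψ(ψ_0) ∏_{l=0}^{n-2} P(ψ_l, ψ_{l+1})`. -/
def pathP (lam mu : ℝ) (m : ℕ) (ψ : Fin (m + 1) → XS) : ℝ :=
  piPsi lam mu (ψ 0).val * ∏ l : Fin m, kerP lam mu (ψ l.castSucc).val (ψ l.succ).val

/-- The partial sum `S_n = ∑_{i=0}^{n-1} f(ψ_i)` along a path, for `n = m+1`. -/
def Spath (lam mu : ℝ) (m : ℕ) (ψ : Fin (m + 1) → XS) : ℝ :=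
  ∑ i : Fin (m + 1), fInfo lam mu (ψ i).val

/-- `Var_n = ∑_paths ℙ_n(path) (S_n - nC)^2`, for `n = m+1`. -/
def VarN (lam mu : ℝ) (m : ℕ) : ℝ :=
  ∑' ψ : Fin (m + 1) → XS,
    pathP lam mu m ψ * (Spath lam mu m ψ - ((m : ℝ) + 1) * Cap lam mu) ^ 2

/-- The explicit stationary variance `V₀` of `f`. -/
def V0 (lam mu : ℝ) : ℝ :=
  Real.log (1 / (1 - lam)) ^ 2 * piQ lam mu 0 +
    Real.log (mu / lam) ^ 2 * mu * (1 - piQ lam mu 0) +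
    Real.log ((1 - mu) / (1 - lam)) ^ 2 * (1 - mu) * (1 - piQ lam mu 0) -
    Cap lam mu ^ 2

/-- The explicit sum of autocovariances `Σ = ∑_{i=0}^∞ Cov_i`. -/
def SigSum (lam mu : ℝ) : ℝ :=
  Real.log (1 / (1 - lam)) *
      (-(cMt lam mu) * rho lam mu / (1 - rho lam mu) - cM0 lam mu * rho lam mu) +
    Real.log (mu / lam) * cM0 lam mu * rho lam mu / (1 - rho lam mu) +
    Real.log ((1 - mu) / (1 - lam)) * (rho lam mu / (1 - rho lam mu)) *
      (cMt lam mu - rho lam mu * cM0 lam mu)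

/-- The asymptotic standard deviation `σ = √(-V₀ + 2Σ)`. -/
def sigmaBE (lam mu : ℝ) : ℝ := Real.sqrt (-(V0 lam mu) + 2 * SigSum lam mu)

/-- The standard normal cumulative distribution function `Φ`. -/
def stdNormCDF (x : ℝ) : ℝ :=
  (Real.sqrt (2 * Real.pi))⁻¹ * ∫ t in Set.Iic x, Real.exp (-(t ^ 2) / 2)

/-- Single-step departure probability `w(ỹ|q)` (queues that have gone negative,
which can only happen on a zero-probability trajectory, are treated like `q = 0`). -/
def wdep (mu : ℝ) (y : Bool) (q : ℤ) : ℝ :=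
  if q ≤ 0 then (if y then 0 else 1) else (if y then mu else 1 - mu)

/-- The queue trajectory `q_i = q_{i-1} + x̃_i - ỹ_{i-1}`, with arrivals `x̃_i = x i`
for `i ≥ 1` and departures `ỹ_i = y i`. -/
def qtraj (q0 : ℕ) (x y : ℕ → Bool) : ℕ → ℤ
  | 0 => (q0 : ℤ)
  | i + 1 => qtraj q0 x y i + (if x (i + 1) then 1 else 0) - (if y i then 1 else 0)

/-- The block channel `W(y|x) = ∏_{i=0}^{n-1} w(ỹ_i|q_i)` of the queue channel. -/
def Wchan (mu : ℝ) (n : ℕ) (q0 : ℕ) (x y : ℕ → Bool) : ℝ :=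
  ∏ i ∈ Finset.range n, wdep mu (y i) (qtraj q0 x y i)

/-- The input distribution `P_X(q_0, x̃) = π_Q(q_0) ∏_{i=1}^{n-1} λ^{x̃_i} λ̄^{1-x̃_i}`. -/
def inpP (lam mu : ℝ) (n : ℕ) (q0 : ℕ) (x : ℕ → Bool) : ℝ :=
  piQ lam mu q0 * ∏ i ∈ Finset.range (n - 1), (if x (i + 1) then lam else 1 - lam)

/-- Extend an arrival word `(x̃_1, …, x̃_m) ∈ {0,1}^m` to a function on ℕ. -/
def extX (m : ℕ) (xf : Fin m → Bool) : ℕ → Bool :=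
  fun i => if h : 1 ≤ i ∧ i ≤ m then xf ⟨i - 1, by omega⟩ else false

/-- Extend an output word `(ỹ_0, …, ỹ_{n-1}) ∈ {0,1}^n` to a function on ℕ. -/
def extY (n : ℕ) (yf : Fin n → Bool) : ℕ → Bool :=
  fun i => if h : i < n then yf ⟨i, h⟩ else false

end

/-!
The departure indicator splits the mass `π_Q(q)` of each level `q ≥ 1` into `μ π_Q(q)` at `(1,q)`
and `μ̄ π_Q(q)` at `(0,q)`, and `f` is constant along each of these two rows. The levels `q ≥ 1`
form a geometric series of total mass `λ/μ`, and `π_Q(0) = 1 - λ/μ`, so the stationary mean is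
`(1 - λ/μ) log(1/λ̄) + (λ/μ) (μ̄ log(μ̄/λ̄) + μ log(μ/λ))`; expanding the logarithms turns this
into `H(λ) - (λ/μ) H(μ)`.
-/

theorem HasSum.bool_prod {α M : Type*} [AddCommMonoid M] [TopologicalSpace M] [ContinuousAdd M]
    {f : Bool × α → M} {a b : M} (hf : HasSum (fun x ↦ f (false, x)) a)
    (ht : HasSum (fun x ↦ f (true, x)) b) : HasSum f (a + b) :=
  (Equiv.boolProdEquivSum α).symm.hasSum_iff.1 (hf.sum ht)

theorem Hbin_sub_div_mul_Hbin {lam mu : ℝ} (hl : lam ≠ 0) (hl1 : 1 - lam ≠ 0) (hm : mu ≠ 0)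
    (hm1 : 1 - mu ≠ 0) :
    Hbin lam - lam / mu * Hbin mu =
      (1 - lam / mu) * Real.log (1 / (1 - lam)) +
        lam / mu * ((1 - mu) * Real.log ((1 - mu) / (1 - lam)) + mu * Real.log (mu / lam)) := by
  rw [one_div, Real.log_inv, Real.log_div hm1 hl1, Real.log_div hm hl, Hbin, Hbin]
  field_simp
  ring

section StationaryMean

variable {lam mu : ℝ}

theorem rho_nonneg (h0 : 0 ≤ lam) (h1 : lam ≤ 1) (h2 : 0 ≤ mu) (h3 : mu ≤ 1) :
    0 ≤ rho lam mu := by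
  have := sub_nonneg.2 h1
  have := sub_nonneg.2 h3
  unfold rho
  positivity

theorem rho_lt_one (h0 : 0 < mu) (h1 : lam < mu) (h2 : mu ≤ 1) : rho lam mu < 1 := by
  rw [rho, div_lt_one (by nlinarith)]
  nlinarith

theorem piQ_zero (hmu : mu ≠ 0) : piQ lam mu 0 = 1 - lam / mu := by
  rw [piQ, if_pos rfl]
  field_simp
  ring

theorem piQ_succ (q : ℕ) : piQ lam mu (q + 1) = piQ lam mu 1 * rho lam mu ^ q := by
  simp only [piQ, Nat.add_one_ne_zero, one_ne_zero, if_false, pow_succ']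
  ring

theorem hasSum_piQ_succ (h0 : 0 ≤ lam) (h1 : lam < mu) (h2 : mu < 1) :
    HasSum (fun q ↦ piQ lam mu (q + 1)) (lam / mu) := by
  have hmu : 0 < mu := h0.trans_lt h1
  have hgeom := (hasSum_geometric_of_lt_one (rho_nonneg h0 (by linarith) hmu.le h2.le)
    (rho_lt_one hmu h1 h2.le)).mul_left (piQ lam mu 1)
  have hsum : piQ lam mu 1 * (1 - rho lam mu)⁻¹ = lam / mu := by
    have : (1 - lam) * mu - lam * (1 - mu) ≠ 0 := by nlinarith
    have : 1 - mu ≠ 0 := by linarith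
    have : 1 - lam ≠ 0 := by linarith
    simp only [piQ, one_ne_zero, if_false, pow_one, rho]
    field_simp
  rw [← hsum, funext piQ_succ]
  exact hgeom

theorem support_piPsi_subset : Function.support (piPsi lam mu) ⊆ {p | p.1 = true → 1 ≤ p.2} := by
  rintro ⟨_ | _, _ | q⟩ hp <;> simp_all [piPsi]

theorem hasSum_piPsi_mul_fInfo_false (h0 : 0 ≤ lam) (h1 : lam < mu) (h2 : mu < 1) :
    HasSum (fun q ↦ piPsi lam mu (false, q) * fInfo lam mu (false, q))
      (piQ lam mu 0 * Real.log (1 / (1 - lam)) +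
        lam / mu * ((1 - mu) * Real.log ((1 - mu) / (1 - lam)))) := by
  have hsucc := (hasSum_piQ_succ h0 h1 h2).mul_right ((1 - mu) * Real.log ((1 - mu) / (1 - lam)))
  refine HasSum.zero_add (hsucc.congr_fun fun q ↦ ?_)
  simp only [piPsi, fInfo]
  ring

theorem hasSum_piPsi_mul_fInfo_true (h0 : 0 ≤ lam) (h1 : lam < mu) (h2 : mu < 1) :
    HasSum (fun q ↦ piPsi lam mu (true, q) * fInfo lam mu (true, q))
      (lam / mu * (mu * Real.log (mu / lam))) := by
  have hsucc := (hasSum_piQ_succ h0 h1 h2).mul_right (mu * Real.log (mu / lam))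
  have hall := HasSum.zero_add (f := fun q ↦ piPsi lam mu (true, q) * fInfo lam mu (true, q))
    (hsucc.congr_fun fun q ↦ by simp only [piPsi, fInfo]; ring)
  simpa only [piPsi, zero_mul, zero_add] using hall

theorem hasSum_piPsi_mul_fInfo (h0 : 0 < lam) (h1 : lam < mu) (h2 : mu < 1) :
    HasSum (fun ψ ↦ piPsi lam mu ψ * fInfo lam mu ψ) (Hbin lam - lam / mu * Hbin mu) := by
  have hmu : 0 < mu := h0.trans h1
  rw [Hbin_sub_div_mul_Hbin h0.ne' (by linarith) hmu.ne' (by linarith), ← piQ_zero hmu.ne',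
    mul_add, ← add_assoc]
  exact (hasSum_piPsi_mul_fInfo_false h0.le h1 h2).bool_prod
    (hasSum_piPsi_mul_fInfo_true h0.le h1 h2)

end StationaryMean

/-- the stationary mean of the information-density function equals the
capacity formula: `∑_{ψ∈𝕏} π_Ψ(ψ) f(ψ) = H(λ) - (λ/μ) H(μ)`. -/
theorem stationary_mean_eq_capacity (lam mu : ℝ)
    (h0 : 0 < lam) (h1 : lam < mu) (h2 : mu < 1) :
    (∑' ψ : XS, piPsi lam mu ψ.val * fInfo lam mu ψ.val) = Hbin lam - lam / mu * Hbin mu := by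
  have hsupp := (Function.support_mul_subset_left (piPsi lam mu) (fInfo lam mu)).trans
    support_piPsi_subset
  exact ((hasSum_subtype_iff_of_support_subset hsupp).2 (hasSum_piPsi_mul_fInfo h0 h1 h2)).tsum_eq
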